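/- arXiv:2012.04551 — 2 statements merged into one kernel-verified Lean document; each statement's English description precedes it below -/
import Mathlib

section
/- Let C = {x ∈ ℝⁿ : Σᵢ xᵢ = K, 0 ≤ x ≤ 1} be nonempty. Then for any x ∈ ℝⁿ, the orthogonal projection of x onto C equals P_{[0,1]}(x − μ̄·1), where P_{[0,1]} is the componentwise clipping to [0,1], i.e., (P_{[0,1]}(v))ᵢ = min(max(vᵢ,0),1), and μ̄ ∈ ℝ satisfies Σᵢ min(max(xᵢ − μ̄, 0), 1) = K. -/
/-!
The clipped point `z̄ = P_{[0,1]}(x - μ̄·1)` satisfies the variational inequality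
`⟪z - z̄, z̄ - x⟫ ≥ 0` for every `z ∈ C`: coordinatewise, `z̄ᵢ - xᵢ = (z̄ᵢ - (xᵢ - μ̄)) - μ̄`, the first
term is the one-dimensional variational inequality of clipping to `[0,1]`, and the `μ̄` terms
cancel after summing because `z` and `z̄` have the same coordinate sum `K`. By the Pythagorean
expansion this makes `z̄` the unique nearest point of `C`.
-/

open scoped RealInnerProductSpace

lemma sq_norm_sub_add_sq_norm_sub_le_of_inner_nonneg {E : Type*} [NormedAddCommGroup E]
    [InnerProductSpace ℝ E] {x p z : E} (h : 0 ≤ ⟪z - p, p - x⟫) :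
    ‖z - p‖ ^ 2 + ‖p - x‖ ^ 2 ≤ ‖z - x‖ ^ 2 := by
  have hsplit : z - x = (z - p) + (p - x) := by abel
  rw [hsplit, norm_add_sq_real]
  linarith

lemma mul_clip_sub_nonneg {a b t : ℝ} (hat : a ≤ t) (htb : t ≤ b) (y : ℝ) :
    0 ≤ (t - min (max y a) b) * (min (max y a) b - y) := by
  rcases le_total y a with hya | hay
  · rw [max_eq_right hya, min_eq_left (hat.trans htb)]
    nlinarith
  · rw [max_eq_left hay]
    rcases le_total y b with hyb | hby
    · simp [min_eq_left hyb]
    · rw [min_eq_right hby]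
      nlinarith

lemma inner_sub_clip_shift_nonneg {ι : Type*} [Fintype ι] (x z : EuclideanSpace ℝ ι) (μ : ℝ)
    (hz : ∀ i, 0 ≤ z i ∧ z i ≤ 1) (hsum : ∑ i, z i = ∑ i, min (max (x i - μ) 0) 1) :
    let zbar : EuclideanSpace ℝ ι := WithLp.toLp 2 (fun i => min (max (x i - μ) 0) 1)
    0 ≤ ⟪z - zbar, zbar - x⟫ := by
  intro zbar
  have hshift : ∀ i, (z i - zbar i) * (zbar i - x i)
      = (z i - zbar i) * (zbar i - (x i - μ)) - μ * (z i - zbar i) := fun i => by ring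
  have hcancel : ∑ i, μ * (z i - zbar i) = 0 := by
    rw [← Finset.mul_sum, Finset.sum_sub_distrib, hsum, sub_self, mul_zero]
  calc (0 : ℝ) ≤ ∑ i, (z i - zbar i) * (zbar i - (x i - μ)) :=
        Finset.sum_nonneg fun i _ => mul_clip_sub_nonneg (hz i).1 (hz i).2 _
    _ = ∑ i, (z i - zbar i) * (zbar i - x i) := by
        simp only [hshift, Finset.sum_sub_distrib, hcancel, sub_zero]
    _ = ⟪z - zbar, zbar - x⟫ := by
        simp only [PiLp.inner_apply, PiLp.sub_apply, RCLike.inner_apply, conj_trivial, mul_comm]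

theorem proj_hyperplane_box_general (n : ℕ) (K : ℝ)
    (x : EuclideanSpace ℝ (Fin n)) (μ : ℝ)
    (hμ : (∑ i, min (max (x i - μ) 0) 1) = K) :
    let C : Set (EuclideanSpace ℝ (Fin n)) :=
      {z | (∑ i, z i) = K ∧ ∀ i, 0 ≤ z i ∧ z i ≤ 1}
    let zbar : EuclideanSpace ℝ (Fin n) := WithLp.toLp 2 (fun i => min (max (x i - μ) 0) 1)
    zbar ∈ C ∧ (∀ z ∈ C, ‖zbar - x‖ ≤ ‖z - x‖) ∧
      ∀ z ∈ C, ‖z - x‖ = ‖zbar - x‖ → z = zbar := by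
  intro C zbar
  have hpyth : ∀ z ∈ C, ‖z - zbar‖ ^ 2 + ‖zbar - x‖ ^ 2 ≤ ‖z - x‖ ^ 2 := fun z hz =>
    sq_norm_sub_add_sq_norm_sub_le_of_inner_nonneg
      (inner_sub_clip_shift_nonneg x z μ hz.2 (hz.1.trans hμ.symm))
  refine ⟨⟨hμ, fun i => ⟨le_min (le_max_right _ _) zero_le_one, min_le_right _ _⟩⟩, ?_, ?_⟩
  · intro z hz
    exact (pow_le_pow_iff_left₀ (norm_nonneg _) (norm_nonneg _) two_ne_zero).mp
      (by linarith [hpyth z hz, sq_nonneg ‖z - zbar‖])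
  · intro z hz heq
    have hsq : ‖z - zbar‖ ^ 2 = 0 := by
      have := hpyth z hz
      rw [heq] at this
      exact le_antisymm (by linarith) (sq_nonneg _)
    exact sub_eq_zero.mp (norm_eq_zero.mp (pow_eq_zero_iff two_ne_zero |>.mp hsq))

/-- Projection onto the intersection of the hyperplane `Σᵢ zᵢ = K` and the box
`[0,1]ⁿ` is componentwise clipping of `x − μ̄·1`, where `μ̄` is chosen so that the
clipped vector sums to `K`. -/
theorem proj_hyperplane_box (n : ℕ) (K : ℝ) (hK0 : 0 ≤ K) (hKn : K ≤ n)
    (x : EuclideanSpace ℝ (Fin n)) (μ : ℝ)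
    (hμ : (∑ i, min (max (x i - μ) 0) 1) = K) :
    let C : Set (EuclideanSpace ℝ (Fin n)) :=
      {z | (∑ i, z i) = K ∧ ∀ i, 0 ≤ z i ∧ z i ≤ 1}
    let zbar : EuclideanSpace ℝ (Fin n) := WithLp.toLp 2 (fun i => min (max (x i - μ) 0) 1)
    zbar ∈ C ∧ (∀ z ∈ C, ‖zbar - x‖ ≤ ‖z - x‖) ∧
      ∀ z ∈ C, ‖z - x‖ = ‖zbar - x‖ → z = zbar :=
  proj_hyperplane_box_general n K x μ hμ
end

section
/- If z̄ = P_{[0,1]}(x − μ̄·1) with μ̄ chosen so that Σᵢ z̄ᵢ = K, then for every z in C = {z : Σᵢ zᵢ = K, 0 ≤ z ≤ 1} we have ⟨x − z̄, z − z̄⟩ ≤ 0; consequently z̄ is the orthogonal projection of x onto C. -/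
open RealInnerProductSpace

/-- If `z̄ = P_{[0,1]}(x − μ̄·1)` with `Σᵢ z̄ᵢ = K`, then `z̄` satisfies the
variational inequality `⟨x − z̄, z − z̄⟩ ≤ 0` for all `z ∈ C`, and hence is the
orthogonal projection of `x` onto `C = {z : Σᵢ zᵢ = K, 0 ≤ z ≤ 1}`. -/
theorem clip_variational_inequality (n : ℕ) (K : ℝ)
    (x : EuclideanSpace ℝ (Fin n)) (μ : ℝ)
    (zbar : EuclideanSpace ℝ (Fin n))
    (hz : ∀ i, zbar i = min (max (x i - μ) 0) 1)
    (hsum : (∑ i, zbar i) = K) :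
    (∀ z : EuclideanSpace ℝ (Fin n),
        ((∑ i, z i) = K ∧ ∀ i, 0 ≤ z i ∧ z i ≤ 1) →
        ⟪x - zbar, z - zbar⟫ ≤ 0) ∧
    ∀ z : EuclideanSpace ℝ (Fin n),
        ((∑ i, z i) = K ∧ ∀ i, 0 ≤ z i ∧ z i ≤ 1) →
        ‖zbar - x‖ ≤ ‖z - x‖ := by
  have key : ∀ z : EuclideanSpace ℝ (Fin n),
      ((∑ i, z i) = K ∧ ∀ i, 0 ≤ z i ∧ z i ≤ 1) →
      ⟪x - zbar, z - zbar⟫ ≤ 0 := by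
    rintro z ⟨hzs, hzb⟩
    have h1 : ⟪x - zbar, z - zbar⟫ = ∑ i, (x i - zbar i) * (z i - zbar i) := by
      simp [PiLp.inner_apply, RCLike.inner_apply, PiLp.sub_apply, mul_comm]
    rw [h1]
    have h2 : ∀ i, (x i - zbar i) * (z i - zbar i) ≤ μ * (z i - zbar i) := by
      intro i
      obtain ⟨hb0, hb1⟩ := hzb i
      have hzi := hz i
      rcases le_or_gt (x i - μ) 0 with h | h
      · have hze : zbar i = 0 := by
          rw [hzi, max_eq_right h, min_eq_left zero_le_one]
        rw [hze]; nlinarith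
      rcases le_or_gt 1 (x i - μ) with h' | h'
      · have hze : zbar i = 1 := by
          rw [hzi, max_eq_left (le_trans zero_le_one h'), min_eq_right h']
        rw [hze]; nlinarith
      · have hze : zbar i = x i - μ := by
          rw [hzi, max_eq_left h.le, min_eq_left h'.le]
        rw [hze]; ring_nf; nlinarith
    calc ∑ i, (x i - zbar i) * (z i - zbar i)
        ≤ ∑ i, μ * (z i - zbar i) := Finset.sum_le_sum fun i _ => h2 i
      _ = μ * ((∑ i, z i) - ∑ i, zbar i) := by
          rw [← Finset.mul_sum, Finset.sum_sub_distrib]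
      _ = 0 := by rw [hzs, hsum]; ring
  refine ⟨key, fun z hzc => ?_⟩
  have h := key z hzc
  have hdecomp : z - x = (z - zbar) + (zbar - x) := by abel
  have hsq : ‖z - x‖^2 = ‖z - zbar‖^2 + 2 * ⟪z - zbar, zbar - x⟫ + ‖zbar - x‖^2 := by
    rw [hdecomp, norm_add_sq_real]
  have hip : ⟪z - zbar, zbar - x⟫ = - ⟪x - zbar, z - zbar⟫ := by
    rw [real_inner_comm]
    have : zbar - x = -(x - zbar) := by abel
    rw [this, inner_neg_left]
  nlinarith [norm_nonneg (z - x), norm_nonneg (zbar - x), norm_nonneg (z - zbar),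
    sq_nonneg ‖z - zbar‖]
end
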